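/- arXiv:2409.18925 — 3 statements merged into one kernel-verified Lean document; each statement's English description precedes it below -/
import Mathlib

section
/- Let f : U → X be a G-equivariant monomorphism of k-schemes. Then the induced morphism Fix_G(f) : Fix_G(U) → Fix_G(X) is a monomorphism, and the commutative square whose horizontal arrows are Fix_G(f) and f and whose vertical arrows are the canonical projections Fix_G(U) → U and Fix_G(X) → X is cartesian, i.e. Fix_G(U) is canonically isomorphic to the fiber product Fix_G(X) ×_X U. -/
/-!
A morphism into `Fix_G(X)` is a morphism `t` into `G ×ₖ X` with `t ≫ m = t ≫ pr₂`. Since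
`G ×ₖ U = (G ×ₖ X) ×_X U`, it suffices to see that `Fix_G(U)` is the preimage of `Fix_G(X)` under
`id_G ×ₖ f`: a point `(g, u)` with `g · f u = f u` satisfies `f (g · u) = f u`, hence `g · u = u`
because `f` is a monomorphism. Pasting the two cartesian squares gives the claim, and `Fix_G(f)`
is a monomorphism as a base change of `f`.
-/

open CategoryTheory CategoryTheory.Limits AlgebraicGeometry

noncomputable section
namespace Paper
universe u
variable (k : CommRingCat.{u})
variable {G X U : Scheme.{u}}

/-- The morphism `(m, pr₂) : G ×ₖ X ⟶ X ×ₖ X`. -/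
def actionPair (sG : G ⟶ Spec k) (sX : X ⟶ Spec k) (m : pullback sG sX ⟶ X)
    (hm : m ≫ sX = pullback.snd sG sX ≫ sX) : pullback sG sX ⟶ pullback sX sX :=
  pullback.lift m (pullback.snd sG sX) hm

/-- The fixed-point scheme `Fix_G(X)`. -/
def Fix (sG : G ⟶ Spec k) (sX : X ⟶ Spec k) (m : pullback sG sX ⟶ X)
    (hm : m ≫ sX = pullback.snd sG sX ≫ sX) : Scheme :=
  pullback (actionPair k sG sX m hm) (pullback.diagonal sX)

/-- The canonical projection `Fix_G(X) ⟶ G ×ₖ X`. -/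
def fixToProd (sG : G ⟶ Spec k) (sX : X ⟶ Spec k) (m : pullback sG sX ⟶ X)
    (hm : m ≫ sX = pullback.snd sG sX ≫ sX) :
    Fix k sG sX m hm ⟶ pullback sG sX :=
  pullback.fst (actionPair k sG sX m hm) (pullback.diagonal sX)

/-- The canonical projection `Fix_G(X) ⟶ X`. -/
def fixToBase (sG : G ⟶ Spec k) (sX : X ⟶ Spec k) (m : pullback sG sX ⟶ X)
    (hm : m ≫ sX = pullback.snd sG sX ≫ sX) :
    Fix k sG sX m hm ⟶ X :=
  pullback.snd (actionPair k sG sX m hm) (pullback.diagonal sX)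

/-- `id_G ×ₖ f : G ×ₖ U ⟶ G ×ₖ X`. -/
def prodMap (sG : G ⟶ Spec k) (sU : U ⟶ Spec k) (sX : X ⟶ Spec k)
    (f : U ⟶ X) (hf : f ≫ sX = sU) : pullback sG sU ⟶ pullback sG sX :=
  pullback.map sG sU sG sX (𝟙 G) f (𝟙 (Spec k)) (by simp) (by simp [hf])

theorem fixMap_w (sG : G ⟶ Spec k) (sU : U ⟶ Spec k) (sX : X ⟶ Spec k)
    (mU : pullback sG sU ⟶ U) (hmU : mU ≫ sU = pullback.snd sG sU ≫ sU)
    (mX : pullback sG sX ⟶ X) (hmX : mX ≫ sX = pullback.snd sG sX ≫ sX)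
    (f : U ⟶ X) (hf : f ≫ sX = sU)
    (heq : prodMap k sG sU sX f hf ≫ mX = mU ≫ f) :
    (fixToProd k sG sU mU hmU ≫ prodMap k sG sU sX f hf) ≫ actionPair k sG sX mX hmX
      = (fixToBase k sG sU mU hmU ≫ f) ≫ pullback.diagonal sX := by
  have h1 : fixToProd k sG sU mU hmU ≫ mU = fixToBase k sG sU mU hmU := by
    have hc : fixToProd k sG sU mU hmU ≫ actionPair k sG sU mU hmU
        = fixToBase k sG sU mU hmU ≫ pullback.diagonal sU := pullback.condition
    have := congrArg (· ≫ pullback.fst sU sU) hc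
    simp only [actionPair, Category.assoc] at this
    erw [pullback.lift_fst, pullback.diagonal_fst, Category.comp_id] at this
    exact this
  have h2 : fixToProd k sG sU mU hmU ≫ pullback.snd sG sU = fixToBase k sG sU mU hmU := by
    have hc : fixToProd k sG sU mU hmU ≫ actionPair k sG sU mU hmU
        = fixToBase k sG sU mU hmU ≫ pullback.diagonal sU := pullback.condition
    have := congrArg (· ≫ pullback.snd sU sU) hc
    simp only [actionPair, Category.assoc] at this
    erw [pullback.lift_snd, pullback.diagonal_snd, Category.comp_id] at this
    exact this
  apply pullback.hom_ext
  · simp only [Category.assoc, actionPair, pullback.lift_fst, pullback.diagonal_fst,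
      Category.comp_id]
    rw [heq, ← Category.assoc, h1]
  · simp only [Category.assoc, actionPair, pullback.lift_snd, pullback.diagonal_snd,
      Category.comp_id]
    rw [show prodMap k sG sU sX f hf ≫ pullback.snd sG sX = pullback.snd sG sU ≫ f from by
      unfold prodMap; erw [pullback.lift_snd]]
    rw [← Category.assoc, h2]

/-- The induced morphism `Fix_G(f) : Fix_G(U) ⟶ Fix_G(X)`. -/
def fixMap (sG : G ⟶ Spec k) (sU : U ⟶ Spec k) (sX : X ⟶ Spec k)
    (mU : pullback sG sU ⟶ U) (hmU : mU ≫ sU = pullback.snd sG sU ≫ sU)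
    (mX : pullback sG sX ⟶ X) (hmX : mX ≫ sX = pullback.snd sG sX ≫ sX)
    (f : U ⟶ X) (hf : f ≫ sX = sU)
    (heq : prodMap k sG sU sX f hf ≫ mX = mU ≫ f) :
    Fix k sG sU mU hmU ⟶ Fix k sG sX mX hmX :=
  pullback.lift (fixToProd k sG sU mU hmU ≫ prodMap k sG sU sX f hf)
    (fixToBase k sG sU mU hmU ≫ f)
    (fixMap_w k sG sU sX mU hmU mX hmX f hf heq)

section

variable {C : Type*} [Category C] [HasPullbacks C]

lemma _root_.CategoryTheory.Limits.isPullback_map_id_snd {G U X S : C}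
    (sG : G ⟶ S) (sU : U ⟶ S) (sX : X ⟶ S) (f : U ⟶ X)
    (h₁ : sG ≫ 𝟙 S = 𝟙 G ≫ sG) (h₂ : sU ≫ 𝟙 S = f ≫ sX) :
    IsPullback (pullback.map sG sU sG sX (𝟙 G) f (𝟙 S) h₁ h₂) (pullback.snd sG sU)
      (pullback.snd sG sX) f := by
  refine .of_right ?_ (pullback.lift_snd _ _ _) (.of_hasPullback sG sX)
  rw [Category.comp_id] at h₂
  rw [pullback.lift_fst, Category.comp_id, ← h₂]
  exact .of_hasPullback sG sU

end

section FixedPoints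

variable {k} {sG : G ⟶ Spec k} {sU : U ⟶ Spec k} {sX : X ⟶ Spec k}
  {mU : pullback sG sU ⟶ U} {hmU : mU ≫ sU = pullback.snd sG sU ≫ sU}
  {mX : pullback sG sX ⟶ X} {hmX : mX ≫ sX = pullback.snd sG sX ≫ sX}
  {f : U ⟶ X} {hf : f ≫ sX = sU}

@[simp]
lemma actionPair_fst : actionPair k sG sX mX hmX ≫ pullback.fst sX sX = mX :=
  pullback.lift_fst _ _ _

@[simp]
lemma actionPair_snd : actionPair k sG sX mX hmX ≫ pullback.snd sX sX = pullback.snd sG sX :=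
  pullback.lift_snd _ _ _

@[simp]
lemma fixToProd_comp_act : fixToProd k sG sX mX hmX ≫ mX = fixToBase k sG sX mX hmX := by
  have h := pullback.condition (f := actionPair k sG sX mX hmX)
    (g := pullback.diagonal sX) =≫ pullback.fst sX sX
  simp only [Category.assoc, actionPair_fst, pullback.diagonal_fst, Category.comp_id] at h
  exact h

@[simp]
lemma fixToProd_comp_snd :
    fixToProd k sG sX mX hmX ≫ pullback.snd sG sX = fixToBase k sG sX mX hmX := by
  have h := pullback.condition (f := actionPair k sG sX mX hmX)
    (g := pullback.diagonal sX) =≫ pullback.snd sX sX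
  simp only [Category.assoc, actionPair_snd, pullback.diagonal_snd, Category.comp_id] at h
  exact h

instance mono_fixToProd : Mono (fixToProd k sG sX mX hmX) :=
  pullback.fst_of_mono

lemma exists_lift_fixToProd {T : Scheme.{u}} (t : T ⟶ pullback sG sX)
    (ht : t ≫ mX = t ≫ pullback.snd sG sX) :
    ∃ l : T ⟶ Fix k sG sX mX hmX, l ≫ fixToProd k sG sX mX hmX = t :=
  ⟨pullback.lift t (t ≫ pullback.snd sG sX) (pullback.hom_ext (by simp [ht]) (by simp)),
    pullback.lift_fst _ _ _⟩

@[simp]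
lemma prodMap_snd : prodMap k sG sU sX f hf ≫ pullback.snd sG sX = pullback.snd sG sU ≫ f :=
  pullback.lift_snd _ _ _

lemma isPullback_prodMap_snd :
    IsPullback (prodMap k sG sU sX f hf) (pullback.snd sG sU) (pullback.snd sG sX) f :=
  isPullback_map_id_snd sG sU sX f (by simp) (by simp [hf])

variable {heq : prodMap k sG sU sX f hf ≫ mX = mU ≫ f}

@[simp]
lemma fixMap_fixToProd :
    fixMap k sG sU sX mU hmU mX hmX f hf heq ≫ fixToProd k sG sX mX hmX =
      fixToProd k sG sU mU hmU ≫ prodMap k sG sU sX f hf :=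
  pullback.lift_fst _ _ _

lemma isPullback_fixMap_fixToProd [Mono f] :
    IsPullback (fixMap k sG sU sX mU hmU mX hmX f hf heq) (fixToProd k sG sU mU hmU)
      (fixToProd k sG sX mX hmX) (prodMap k sG sU sX f hf) := by
  refine IsPullback.mk' fixMap_fixToProd (fun T φ φ' _ h ↦ (cancel_mono _).1 h) ?_
  intro T a t hat
  have ht : t ≫ mU = t ≫ pullback.snd sG sU := by
    rw [← cancel_mono f]
    calc (t ≫ mU) ≫ f = (t ≫ prodMap k sG sU sX f hf) ≫ mX := by
          simp only [Category.assoc, heq]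
      _ = (t ≫ prodMap k sG sU sX f hf) ≫ pullback.snd sG sX := by
          rw [← hat, Category.assoc, Category.assoc, fixToProd_comp_act, fixToProd_comp_snd]
      _ = (t ≫ pullback.snd sG sU) ≫ f := by simp only [Category.assoc, prodMap_snd]
  obtain ⟨l, hl⟩ := exists_lift_fixToProd (hmX := hmU) t ht
  exact ⟨l, by rw [← cancel_mono (fixToProd k sG sX mX hmX)]; simp [reassoc_of% hl, hat], hl⟩

end FixedPoints

/-- If `f : U ⟶ X` is a `G`-equivariant monomorphism of `k`-schemes, then
`Fix_G(f) : Fix_G(U) ⟶ Fix_G(X)` is a monomorphism and the square with horizontal arrows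
`Fix_G(f)`, `f` and vertical arrows the canonical projections is cartesian, i.e.
`Fix_G(U) ≅ Fix_G(X) ×_X U`. -/
theorem statement0 (sG : G ⟶ Spec k) (sU : U ⟶ Spec k) (sX : X ⟶ Spec k)
    (mU : pullback sG sU ⟶ U) (hmU : mU ≫ sU = pullback.snd sG sU ≫ sU)
    (mX : pullback sG sX ⟶ X) (hmX : mX ≫ sX = pullback.snd sG sX ≫ sX)
    (f : U ⟶ X) (hf : f ≫ sX = sU)
    (heq : prodMap k sG sU sX f hf ≫ mX = mU ≫ f)
    [Mono f] :
    Mono (fixMap k sG sU sX mU hmU mX hmX f hf heq) ∧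
    IsPullback (fixMap k sG sU sX mU hmU mX hmX f hf heq)
      (fixToBase k sG sU mU hmU) (fixToBase k sG sX mX hmX) f := by
  have h := (isPullback_fixMap_fixToProd (hmU := hmU) (hmX := hmX) (heq := heq)).paste_vert
    isPullback_prodMap_snd
  simp only [fixToProd_comp_snd] at h
  exact ⟨h.mono_fst_of_mono, h⟩

end Paper
end
end

section
/- Let C be a bounded chain complex of finitely generated free R-modules which is exact (acyclic), and let g : C → C be a chain map. Then the alternating sum of traces vanishes: Σ_i (−1)^i tr(g_i) = 0. -/
/-!
An acyclic complex of projectives that is bounded above is contractible: there is a homotopy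
`h` with `d h + h d = 1`. For a chain map `g`, cyclicity of the trace turns
`tr g_n = tr (g_n d h) + tr (g_n h d)` into `t (n + 1) + t n` with `t n = tr (h g d)`,
so the alternating sum telescopes to zero.
-/

open CategoryTheory CategoryTheory.Limits

theorem finsum_sub_comp_add_one {M : Type*} [AddCommGroup M] {u : ℤ → M}
    (hu : (Function.support u).Finite) : ∑ᶠ n : ℤ, (u n - u (n + 1)) = 0 := by
  have hu' : (Function.support fun n : ℤ => u (n + 1)).Finite :=
    hu.preimage (add_left_injective 1).injOn
  rw [finsum_sub_distrib hu hu', ← finsum_comp_equiv (Equiv.addRight 1) (f := u)]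
  exact sub_self _

theorem neg_one_pow_natAbs_add_one {R : Type*} [Ring R] (n : ℤ) :
    (-1 : R) ^ (n + 1).natAbs = -(-1 : R) ^ n.natAbs := by
  simp only [← Int.coe_negOnePow, Int.negOnePow_succ, Units.val_neg, Int.cast_neg]

theorem ModuleCat.trace_hom_comp_comm {R : Type*} [CommRing R] {X Y : ModuleCat R}
    [Module.Free R X] [Module.Finite R X] [Module.Free R Y] [Module.Finite R Y]
    (f : X ⟶ Y) (g : Y ⟶ X) :
    LinearMap.trace R X (f ≫ g).hom = LinearMap.trace R Y (g ≫ f).hom :=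
  LinearMap.trace_comp_comm' f.hom g.hom

theorem ChainComplex.exactAt_restriction_embeddingUpIntDownInt {V : Type*} [Category* V]
    [HasZeroMorphisms V] (C : ChainComplex V ℤ) (n : ℤ) (hC : C.ExactAt (-n)) :
    (C.restriction ComplexShape.embeddingUpIntDownInt).ExactAt n := by
  rw [HomologicalComplex.exactAt_iff' _ (n - 1) n (n + 1) (by simp) (by simp)]
  rwa [HomologicalComplex.exactAt_iff' _ (-(n - 1)) (-n) (-(n + 1)) (by simp; omega)
    (by simp; omega)] at hC

namespace CochainComplex

variable {R : Type*} [CommRing R] {K : CochainComplex (ModuleCat R) ℤ}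
  [∀ n, Module.Free R (K.X n)] [∀ n, Module.Finite R (K.X n)]

theorem trace_f_eq_of_homotopy_id_zero (h : Homotopy (𝟙 K) 0) (g : K ⟶ K) (n : ℤ) :
    LinearMap.trace R (K.X n) (g.f n).hom =
      LinearMap.trace R (K.X (n + 1)) (h.hom (n + 1) n ≫ g.f n ≫ K.d n (n + 1)).hom +
        LinearMap.trace R (K.X n) (h.hom n (n - 1) ≫ g.f (n - 1) ≫ K.d (n - 1) n).hom := by
  have hid : 𝟙 (K.X n) = K.d n (n + 1) ≫ h.hom (n + 1) n + h.hom n (n - 1) ≫ K.d (n - 1) n := by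
    simpa [dNext_eq _ (show (ComplexShape.up ℤ).Rel n (n + 1) by simp),
      prevD_eq _ (show (ComplexShape.up ℤ).Rel (n - 1) n by simp)] using h.comm n
  conv_lhs => rw [← Category.id_comp (g.f n), hid]
  rw [Preadditive.add_comp, ModuleCat.hom_add, map_add, Category.assoc,
    ModuleCat.trace_hom_comp_comm, Category.assoc, Category.assoc, ← g.comm]

theorem finsum_neg_one_pow_mul_trace_eq_zero_of_homotopy_id_zero (h : Homotopy (𝟙 K) 0)
    (g : K ⟶ K) (hK : {n | ¬IsZero (K.X n)}.Finite) :
    ∑ᶠ n : ℤ, (-1 : R) ^ n.natAbs * LinearMap.trace R (K.X n) (g.f n).hom = 0 := by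
  set t : ℤ → R := fun n =>
    LinearMap.trace R (K.X n) (h.hom n (n - 1) ≫ g.f (n - 1) ≫ K.d (n - 1) n).hom with ht
  have htrace (n : ℤ) : LinearMap.trace R (K.X n) (g.f n).hom = t (n + 1) + t n := by
    rw [trace_f_eq_of_homotopy_id_zero h g n, ht]
    beta_reduce
    rw [add_sub_cancel_right]
  have hsupp : (Function.support fun n => (-1 : R) ^ n.natAbs * t n).Finite := by
    refine hK.subset fun n hn hzero => hn ?_
    simp [ht, (hzero.eq_of_src _ 0 : _ = (0 : K.X n ⟶ K.X n))]
  calc ∑ᶠ n : ℤ, (-1 : R) ^ n.natAbs * LinearMap.trace R (K.X n) (g.f n).hom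
      = ∑ᶠ n : ℤ, ((-1 : R) ^ n.natAbs * t n - (-1 : R) ^ (n + 1).natAbs * t (n + 1)) := by
        refine finsum_congr fun n => ?_
        rw [htrace, neg_one_pow_natAbs_add_one]
        ring
    _ = 0 := finsum_sub_comp_add_one hsupp

end CochainComplex

/-- If `C` is a bounded chain complex of finitely generated free `R`-modules
which is exact (acyclic), and `g : C ⟶ C` is a chain map, then the alternating sum of
traces vanishes: `Σᵢ (−1)ⁱ tr(gᵢ) = 0`. (Here `(-1)^i` for `i : ℤ` is written as
`(-1)^i.natAbs`, which agrees with it since `|i|` and `i` have the same parity.) -/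
theorem statement6 {R : Type} [CommRing R] (C : ChainComplex (ModuleCat R) ℤ)
    [∀ i, Module.Free R (C.X i)] [∀ i, Module.Finite R (C.X i)]
    (hbdd : ∃ N : ℕ, ∀ i : ℤ, (N : ℤ) < |i| → IsZero (C.X i))
    (hexact : ∀ i : ℤ, C.ExactAt i)
    (g : C ⟶ C) :
    ∑ᶠ i : ℤ, ((-1 : R) ^ i.natAbs) * LinearMap.trace R (C.X i) (g.f i).hom = 0 := by
  obtain ⟨N, hN⟩ := hbdd
  -- `K.X n = C.X (-n)`: reindexed as a cochain complex, `C` becomes bounded above.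
  let K : CochainComplex (ModuleCat R) ℤ := C.restriction ComplexShape.embeddingUpIntDownInt
  have hKzero (n : ℤ) (hn : (N : ℤ) < |n|) : IsZero (K.X n) := hN (-n) (by rwa [abs_neg])
  have : ∀ n, Module.Free R (K.X n) := fun n => inferInstanceAs (Module.Free R (C.X (-n)))
  have : ∀ n, Module.Finite R (K.X n) := fun n => inferInstanceAs (Module.Finite R (C.X (-n)))
  have : ∀ n, Projective (K.X n) := fun n =>
    ModuleCat.projective_of_free (Module.Free.chooseBasis R (K.X n))
  have : K.IsStrictlyLE N := (CochainComplex.isStrictlyLE_iff K N).2 fun n hn =>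
    hKzero n (hn.trans_le (le_abs_self n))
  have : K.IsKProjective := CochainComplex.isKProjective_of_projective K N
  have hK : K.Acyclic := fun n => C.exactAt_restriction_embeddingUpIntDownInt n (hexact (-n))
  have hsupp : {n | ¬IsZero (K.X n)}.Finite := (Set.finite_Icc (-(N : ℤ)) N).subset
    fun n hn => abs_le.1 (not_lt.1 (mt (hKzero n) hn))
  rw [← finsum_comp_equiv (Equiv.neg ℤ)]
  refine (finsum_congr fun n => ?_).trans
    (CochainComplex.finsum_neg_one_pow_mul_trace_eq_zero_of_homotopy_id_zero
      (CochainComplex.IsKProjective.homotopyZero (𝟙 K) hK)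
      (HomologicalComplex.restrictionMap g ComplexShape.embeddingUpIntDownInt) hsupp)
  rw [Equiv.neg_apply, Int.natAbs_neg]
  rfl
end

section
/- The preimage φ⁻¹(A·1_C) ⊆ B (equivalently, the fiber product B ×_C A formed using φ and the structure map A → C) equals the A-subalgebra of B generated by e₁ = ξ₀ + ξ₁ and e₂ = ξ₀ξ₁; moreover the A-algebra homomorphism A[x]/((x − 2t₁)(x − 2t₂)(x − (t₁ + t₂))) → B sending x to ξ₀ + ξ₁ is well defined and injective with image φ⁻¹(A·1_C). In particular, φ⁻¹(A·1_C) is a free A-module of rank 3. -/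
set_option synthInstance.maxHeartbeats 1000000
set_option maxHeartbeats 1000000

noncomputable section

namespace Paper8

open MvPolynomial in
section

/-- The Laurent polynomial ring `A = k[t₁^{±1}, t₂^{±1}]`, realized as the group algebra
of `ℤ²` over `k`. -/
abbrev A (k : Type) [Field k] : Type := AddMonoidAlgebra k (Fin 2 →₀ ℤ)

variable (k : Type) [Field k]

/-- The Laurent variable `tᵢ₊₁ ∈ A`. -/
def t (i : Fin 2) : A k := AddMonoidAlgebra.single (Finsupp.single i 1) 1

/-- The ideal `((ξ₀ − t₁)(ξ₀ − t₂), (ξ₁ − t₁)(ξ₁ − t₂))` of `A[ξ₀, ξ₁]`. -/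
def bIdeal : Ideal (MvPolynomial (Fin 2) (A k)) :=
  Ideal.span {(X 0 - C (t k 0)) * (X 0 - C (t k 1)),
              (X 1 - C (t k 0)) * (X 1 - C (t k 1))}

/-- `B = A[ξ₀, ξ₁]/((ξ₀ − t₁)(ξ₀ − t₂), (ξ₁ − t₁)(ξ₁ − t₂))`. -/
abbrev B : Type := MvPolynomial (Fin 2) (A k) ⧸ bIdeal k

/-- The class `ξᵢ ∈ B`. -/
def ξ (i : Fin 2) : B k := Ideal.Quotient.mk (bIdeal k) (X i)

/-- The ideal `((ξ − t₁)(ξ − t₂))` of `A[ξ]`. -/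
def cIdeal : Ideal (Polynomial (A k)) :=
  Ideal.span {(Polynomial.X - Polynomial.C (t k 0)) * (Polynomial.X - Polynomial.C (t k 1))}

/-- `C = A[ξ]/((ξ − t₁)(ξ − t₂))`. -/
abbrev Cring : Type := Polynomial (A k) ⧸ cIdeal k

/-- The class `ξ ∈ C`. -/
def ξC : Cring k := Ideal.Quotient.mk (cIdeal k) Polynomial.X

/-- The ideal `((x − 2t₁)(x − 2t₂)(x − (t₁ + t₂)))` of `A[x]`. -/
def qIdeal : Ideal (Polynomial (A k)) :=
  Ideal.span {(Polynomial.X - Polynomial.C (2 * t k 0)) *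
      (Polynomial.X - Polynomial.C (2 * t k 1)) *
      (Polynomial.X - Polynomial.C (t k 0 + t k 1))}

/-- `A[x]/((x − 2t₁)(x − 2t₂)(x − (t₁ + t₂)))`. -/
abbrev Q : Type := Polynomial (A k) ⧸ qIdeal k

end

/-!
`B` is free over `A` on `1, ξ₀, ξ₁, ξ₀ξ₁`: these span because `ξᵢ² = (t₁ + t₂)ξᵢ − t₁t₂`, and they
are independent because evaluating at the four torus-fixed points `(ξ₀, ξ₁) ↦ (tᵢ, tⱼ)` gives a
system that is invertible over the domain `A`, as `t₁ ≠ t₂`. Composing `φ` with the two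
evaluations `ξ ↦ t₁`, `ξ ↦ t₂` of `C` yields the evaluations of `B` at `(t₁, t₂)` and `(t₂, t₁)`;
these agree on `φ⁻¹(A)`, which forces equal `ξ₀`- and `ξ₁`-coordinates, i.e. membership in
`A[e₁, e₂]`. As `2e₂ = e₁² − (t₁ + t₂)e₁ + 2t₁t₂` and `2` is invertible, this is `A[e₁]`. Finally
`e₁` is a root of the cubic, being a sum of two roots of `(X − t₁)(X − t₂)`, and `1, e₁, e₁²` are
independent in the coordinates above, so `A[x]/(cubic) ≅ A[e₁] = φ⁻¹(A)`.
-/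

section RootsOfQuadratic

variable {R : Type*} [CommRing R] {a b x y : R}

theorem add_cubic_eq_zero_of_roots (hx : (x - a) * (x - b) = 0) (hy : (y - a) * (y - b) = 0) :
    (x + y - 2 * a) * (x + y - 2 * b) * (x + y - (a + b)) = 0 := by
  linear_combination (x + 3 * y - 2 * a - 2 * b) * hx + (3 * x + y - 2 * a - 2 * b) * hy

theorem two_mul_mul_eq_of_roots (hx : (x - a) * (x - b) = 0) (hy : (y - a) * (y - b) = 0) :
    2 * (x * y) = (x + y) ^ 2 - (a + b) * (x + y) + 2 * (a * b) := by
  linear_combination -hx - hy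

end RootsOfQuadratic

section LaurentRing

variable (k : Type) [Field k]

theorem t_injective : Function.Injective (t k) := fun _ _ h =>
  Finsupp.single_left_injective one_ne_zero
    (AddMonoidAlgebra.single_left_injective one_ne_zero h)

theorem t_sub_t_ne_zero : t k 0 - t k 1 ≠ 0 :=
  sub_ne_zero.2 ((t_injective k).ne zero_ne_one)

theorem t_sub_mul_t_sub (i : Fin 2) : (t k i - t k 0) * (t k i - t k 1) = 0 := by
  fin_cases i <;> simp

theorem isUnit_two (hk : (2 : k) ≠ 0) : IsUnit (2 : A k) := by
  simpa only [map_ofNat] using (isUnit_iff_ne_zero.2 hk).map (algebraMap k (A k))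

end LaurentRing

section Resolution

variable (k : Type) [Field k]

theorem ξ_sub_mul_ξ_sub (i : Fin 2) :
    (ξ k i - algebraMap (A k) (B k) (t k 0)) * (ξ k i - algebraMap (A k) (B k) (t k 1)) = 0 := by
  refine (Ideal.Quotient.eq_zero_iff_mem).2 (Ideal.subset_span ?_)
  fin_cases i <;> simp

def evalB (p : Fin 2 → Fin 2) : B k →ₐ[A k] A k :=
  Ideal.Quotient.liftₐ (bIdeal k) (MvPolynomial.aeval fun i => t k (p i)) fun _ hP =>
    (Ideal.span_le (I := RingHom.ker (MvPolynomial.aeval (R := A k) fun i => t k (p i)))).2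
      (by rintro _ (rfl | rfl) <;> simp [t_sub_mul_t_sub]) hP

@[simp]
theorem evalB_ξ (p : Fin 2 → Fin 2) (i : Fin 2) : evalB k p (ξ k i) = t k (p i) :=
  MvPolynomial.aeval_X _ i

theorem exists_eq_linear_combination_ξ (x : B k) : ∃ a b c d : A k,
    x = algebraMap (A k) (B k) a + algebraMap (A k) (B k) b * ξ k 0
      + algebraMap (A k) (B k) c * ξ k 1 + algebraMap (A k) (B k) d * (ξ k 0 * ξ k 1) := by
  obtain ⟨P, rfl⟩ := Ideal.Quotient.mk_surjective x
  induction P using MvPolynomial.induction_on with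
  | C a => exact ⟨a, 0, 0, 0, by simp only [map_zero, zero_mul, add_zero]; rfl⟩
  | add P Q hP hQ =>
    obtain ⟨a, b, c, d, hP⟩ := hP
    obtain ⟨a', b', c', d', hQ⟩ := hQ
    exact ⟨a + a', b + b', c + c', d + d', by rw [map_add, hP, hQ]; simp only [map_add]; ring⟩
  | mul_X P i hP =>
    obtain ⟨a, b, c, d, hP⟩ := hP
    rw [map_mul, hP, show Ideal.Quotient.mk (bIdeal k) (MvPolynomial.X i) = ξ k i from rfl]
    match i with
    | 0 =>
      refine ⟨-(t k 0 * t k 1 * b), a + (t k 0 + t k 1) * b, -(t k 0 * t k 1 * d),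
        c + (t k 0 + t k 1) * d, ?_⟩
      simp only [map_add, map_mul, map_neg]
      linear_combination (algebraMap (A k) (B k) b + algebraMap (A k) (B k) d * ξ k 1) *
        ξ_sub_mul_ξ_sub k 0
    | 1 =>
      refine ⟨-(t k 0 * t k 1 * c), -(t k 0 * t k 1 * d), a + (t k 0 + t k 1) * c,
        b + (t k 0 + t k 1) * d, ?_⟩
      simp only [map_add, map_mul, map_neg]
      linear_combination (algebraMap (A k) (B k) c + algebraMap (A k) (B k) d * ξ k 0) *
        ξ_sub_mul_ξ_sub k 1

theorem eq_zero_of_linear_combination_ξ_eq_zero {a b c d : A k}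
    (h : algebraMap (A k) (B k) a + algebraMap (A k) (B k) b * ξ k 0
      + algebraMap (A k) (B k) c * ξ k 1 + algebraMap (A k) (B k) d * (ξ k 0 * ξ k 1) = 0) :
    a = 0 ∧ b = 0 ∧ c = 0 ∧ d = 0 := by
  have ev (p : Fin 2 → Fin 2) :
      a + b * t k (p 0) + c * t k (p 1) + d * (t k (p 0) * t k (p 1)) = 0 := by
    simpa using congrArg (evalB k p) h
  have h00 := ev ![0, 0]
  have h01 := ev ![0, 1]
  have h10 := ev ![1, 0]
  have h11 := ev ![1, 1]
  simp only [Matrix.cons_val_zero, Matrix.cons_val_one] at h00 h01 h10 h11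
  have hδ := t_sub_t_ne_zero k
  obtain rfl : d = 0 := by
    have : d * (t k 0 - t k 1) ^ 2 = 0 := by linear_combination h00 - h01 - h10 + h11
    exact (mul_eq_zero.1 this).resolve_right (pow_ne_zero 2 hδ)
  obtain rfl : b = 0 := by
    have : b * (t k 0 - t k 1) = 0 := by linear_combination h00 - h10
    exact (mul_eq_zero.1 this).resolve_right hδ
  obtain rfl : c = 0 := by
    have : c * (t k 0 - t k 1) = 0 := by linear_combination h00 - h01
    exact (mul_eq_zero.1 this).resolve_right hδ
  exact ⟨by simpa using h00, rfl, rfl, rfl⟩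

/-- `B` is an `A`-module as a quotient module, and that structure is not reducibly the one of
`Algebra.toModule`, so `Algebra.smul_def` does not rewrite its scalar multiplication. -/
theorem smul_eq_algebraMap_mul (r : A k) (x : B k) : r • x = algebraMap (A k) (B k) r * x :=
  Algebra.smul_def r x

theorem two_mul_ξ_mul_ξ : 2 * (ξ k 0 * ξ k 1) = (ξ k 0 + ξ k 1) ^ 2
    - algebraMap (A k) (B k) (t k 0 + t k 1) * (ξ k 0 + ξ k 1)
    + algebraMap (A k) (B k) (2 * (t k 0 * t k 1)) := by
  simp only [map_add, map_mul, map_ofNat]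
  exact two_mul_mul_eq_of_roots (R := B k) (ξ_sub_mul_ξ_sub k 0) (ξ_sub_mul_ξ_sub k 1)

end Resolution

section ExceptionalLocus

variable (k : Type) [Field k]

def evalC (i : Fin 2) : Cring k →ₐ[A k] A k :=
  Ideal.Quotient.liftₐ (cIdeal k) (Polynomial.aeval (t k i)) fun _ hP => by
    obtain ⟨P, rfl⟩ := Ideal.mem_span_singleton'.1 hP
    simp [t_sub_mul_t_sub]

@[simp]
theorem evalC_ξC (i : Fin 2) : evalC k i (ξC k) = t k i :=
  Polynomial.aeval_X _

end ExceptionalLocus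

section SumOfRoots

variable (k : Type) [Field k]

def cubic : Polynomial (A k) :=
  (Polynomial.X - Polynomial.C (2 * t k 0)) * (Polynomial.X - Polynomial.C (2 * t k 1)) *
    (Polynomial.X - Polynomial.C (t k 0 + t k 1))

theorem cubic_monic : (cubic k).Monic :=
  ((Polynomial.monic_X_sub_C _).mul (Polynomial.monic_X_sub_C _)).mul (Polynomial.monic_X_sub_C _)

theorem natDegree_cubic : (cubic k).natDegree = 3 := by
  unfold cubic
  compute_degree!

/-- `Q k` is definitionally `AdjoinRoot (cubic k)`. -/
def basisQ : Module.Basis (Fin 3) (A k) (Q k) :=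
  (AdjoinRoot.powerBasis' (cubic_monic k)).basis.reindex
    (finCongr ((AdjoinRoot.powerBasis'_dim _).trans (natDegree_cubic k)))

theorem basisQ_apply (i : Fin 3) :
    basisQ k i = Ideal.Quotient.mk (qIdeal k) Polynomial.X ^ (i : ℕ) := by
  unfold basisQ
  exact (Module.Basis.reindex_apply (M := AdjoinRoot (cubic k)) _ _ _).trans
    (congrFun (PowerBasis.coe_basis _) _)

theorem aeval_sum_cubic : Polynomial.aeval (ξ k 0 + ξ k 1) (cubic k) = 0 := by
  simp only [cubic, map_mul, map_sub, map_add, map_ofNat, Polynomial.aeval_X, Polynomial.aeval_C]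
  exact add_cubic_eq_zero_of_roots (R := B k) (ξ_sub_mul_ξ_sub k 0) (ξ_sub_mul_ξ_sub k 1)

def sumHom : Q k →ₐ[A k] B k :=
  Ideal.Quotient.liftₐ (qIdeal k) (Polynomial.aeval (ξ k 0 + ξ k 1)) fun _ hP => by
    obtain ⟨P, rfl⟩ := Ideal.mem_span_singleton'.1 hP
    exact (map_mul _ P (cubic k)).trans (by rw [aeval_sum_cubic, mul_zero])

theorem sumHom_X : sumHom k (Ideal.Quotient.mk (qIdeal k) Polynomial.X) = ξ k 0 + ξ k 1 :=
  Polynomial.aeval_X _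

theorem range_sumHom : (sumHom k).range = Algebra.adjoin (A k) {ξ k 0 + ξ k 1} := by
  rw [← Algebra.map_top, ← sumHom_X, ← AlgHom.map_adjoin_singleton]
  congr
  exact (AdjoinRoot.adjoinRoot_eq_top (f := cubic k)).symm

variable {k}

theorem linearIndependent_pow_sum (hk : (2 : k) ≠ 0) :
    LinearIndependent (A k) fun i : Fin 3 => (ξ k 0 + ξ k 1) ^ (i : ℕ) := by
  rw [Fintype.linearIndependent_iff]
  intro g hg
  simp only [Fin.sum_univ_three, Fin.val_zero, Fin.val_one, Fin.val_two, pow_zero, pow_one,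
    smul_eq_algebraMap_mul, mul_one] at hg
  have he := two_mul_ξ_mul_ξ k
  simp only [map_add, map_mul, map_ofNat] at he
  obtain ⟨h0, h1, -, h2⟩ := eq_zero_of_linear_combination_ξ_eq_zero k
    (a := g 0 - 2 * (t k 0 * t k 1) * g 2) (b := g 1 + (t k 0 + t k 1) * g 2)
    (c := g 1 + (t k 0 + t k 1) * g 2) (d := 2 * g 2) (by
      simp only [map_add, map_mul, map_sub, map_ofNat]
      linear_combination hg + algebraMap (A k) (B k) (g 2) * he)
  have hg2 : g 2 = 0 := (isUnit_two k hk).mul_right_eq_zero.1 h2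
  have hg1 : g 1 = 0 := by linear_combination h1 - (t k 0 + t k 1) * hg2
  have hg0 : g 0 = 0 := by linear_combination h0 + 2 * (t k 0 * t k 1) * hg2
  intro i
  fin_cases i <;> assumption

theorem sumHom_injective (hk : (2 : k) ≠ 0) : Function.Injective (sumHom k) := by
  refine LinearMap.injective_of_linearIndependent (f := (sumHom k).toLinearMap)
    (basisQ k).span_eq ?_
  have hv : ⇑(sumHom k).toLinearMap ∘ ⇑(basisQ k) =
      fun i : Fin 3 => (ξ k 0 + ξ k 1) ^ (i : ℕ) := by
    ext i
    simp [basisQ_apply, sumHom_X]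
  rw [hv]
  exact linearIndependent_pow_sum hk

theorem adjoin_sum_mul_eq_adjoin_sum (hk : (2 : k) ≠ 0) :
    Algebra.adjoin (A k) {ξ k 0 + ξ k 1, ξ k 0 * ξ k 1} = Algebra.adjoin (A k) {ξ k 0 + ξ k 1} := by
  set S := Algebra.adjoin (A k) {ξ k 0 + ξ k 1}
  have hsum : ξ k 0 + ξ k 1 ∈ S := Algebra.self_mem_adjoin_singleton _ _
  have hmul : ξ k 0 * ξ k 1 ∈ S := by
    obtain ⟨u, hu⟩ := isUnit_two k hk
    have : ξ k 0 * ξ k 1 = algebraMap (A k) (B k) ↑u⁻¹ * (2 * (ξ k 0 * ξ k 1)) := by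
      rw [← mul_assoc, ← map_ofNat (algebraMap (A k) (B k)), ← map_mul, ← hu, Units.inv_mul,
        map_one, one_mul]
    rw [this, two_mul_ξ_mul_ξ k]
    exact mul_mem (S.algebraMap_mem _) (add_mem (sub_mem (pow_mem hsum 2)
      (mul_mem (S.algebraMap_mem _) hsum)) (S.algebraMap_mem _))
  exact le_antisymm (Algebra.adjoin_le (Set.insert_subset hsum (Set.singleton_subset_iff.2 hmul)))
    (Algebra.adjoin_mono (Set.singleton_subset_iff.2 (Set.mem_insert _ _)))

end SumOfRoots

section Preimage

variable {k : Type} [Field k] (φ : B k →ₐ[A k] Cring k)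

theorem evalC_comp (hφ0 : φ (ξ k 0) = ξC k)
    (hφ1 : φ (ξ k 1) = @algebraMap (A k) (Cring k) _ inferInstance _ (t k 0 + t k 1) - ξC k)
    (i : Fin 2) : (evalC k i).comp φ = evalB k ![i, 1 - i] := by
  refine Ideal.Quotient.algHom_ext _ (MvPolynomial.algHom_ext fun j => ?_)
  change evalC k i (φ (ξ k j)) = evalB k ![i, 1 - i] (ξ k j)
  rw [evalB_ξ]
  fin_cases i <;> fin_cases j <;> simp [hφ0, hφ1]

theorem evalB_eq_of_mem_comap_bot (hφ0 : φ (ξ k 0) = ξC k)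
    (hφ1 : φ (ξ k 1) = @algebraMap (A k) (Cring k) _ inferInstance _ (t k 0 + t k 1) - ξC k)
    {x : B k} (hx : x ∈ Subalgebra.comap φ ⊥) : evalB k ![0, 1] x = evalB k ![1, 0] x := by
  obtain ⟨r, hr⟩ := Algebra.mem_bot.1 ((Subalgebra.mem_comap _ _ _).1 hx)
  have h (i : Fin 2) : evalB k ![i, 1 - i] x = r := by
    rw [← evalC_comp φ hφ0 hφ1, AlgHom.comp_apply, ← hr, AlgHom.commutes]
    rfl
  simpa using (h 0).trans (h 1).symm

theorem sum_mem_comap_bot (hφ0 : φ (ξ k 0) = ξC k)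
    (hφ1 : φ (ξ k 1) = @algebraMap (A k) (Cring k) _ inferInstance _ (t k 0 + t k 1) - ξC k) :
    ξ k 0 + ξ k 1 ∈ Subalgebra.comap φ ⊥ := by
  rw [Subalgebra.mem_comap, map_add, hφ0, hφ1, add_sub_cancel]
  exact Subalgebra.algebraMap_mem _ _

theorem comap_bot_eq_adjoin_sum (hk : (2 : k) ≠ 0) (hφ0 : φ (ξ k 0) = ξC k)
    (hφ1 : φ (ξ k 1) = @algebraMap (A k) (Cring k) _ inferInstance _ (t k 0 + t k 1) - ξC k) :
    Subalgebra.comap φ ⊥ = Algebra.adjoin (A k) {ξ k 0 + ξ k 1} := by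
  refine le_antisymm (fun x hx => ?_)
    (Algebra.adjoin_le (Set.singleton_subset_iff.2 (sum_mem_comap_bot φ hφ0 hφ1)))
  obtain ⟨a, b, c, d, rfl⟩ := exists_eq_linear_combination_ξ k x
  have h := evalB_eq_of_mem_comap_bot φ hφ0 hφ1 hx
  simp only [Fin.isValue, map_add, AlgHom.commutes, Algebra.algebraMap_self, RingHom.id_apply,
    map_mul, evalB_ξ, Matrix.cons_val_zero, Matrix.cons_val_one, Matrix.cons_val_fin_one] at h
  obtain rfl : c = b := by
    have : (b - c) * (t k 0 - t k 1) = 0 := by linear_combination h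
    exact (sub_eq_zero.1 ((mul_eq_zero.1 this).resolve_right (t_sub_t_ne_zero k))).symm
  rw [← adjoin_sum_mul_eq_adjoin_sum hk]
  have hsum : ξ k 0 + ξ k 1 ∈ Algebra.adjoin (A k) {ξ k 0 + ξ k 1, ξ k 0 * ξ k 1} :=
    Algebra.subset_adjoin (Set.mem_insert _ _)
  have hmul : ξ k 0 * ξ k 1 ∈ Algebra.adjoin (A k) {ξ k 0 + ξ k 1, ξ k 0 * ξ k 1} :=
    Algebra.subset_adjoin (Set.mem_insert_of_mem _ rfl)
  rw [show ∀ u v : B k, u + v * ξ k 0 + v * ξ k 1 = u + v * (ξ k 0 + ξ k 1) from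
    fun u v => by ring]
  exact add_mem (add_mem (Subalgebra.algebraMap_mem _ _)
    (mul_mem (Subalgebra.algebraMap_mem _ _) hsum)) (mul_mem (Subalgebra.algebraMap_mem _ _) hmul)

end Preimage

/-- Let `φ : B → C` be the `A`-algebra homomorphism with `φ(ξ₀) = ξ` and
`φ(ξ₁) = t₁ + t₂ − ξ`.  Then `φ⁻¹(A·1_C) ⊆ B` equals the `A`-subalgebra generated by
`e₁ = ξ₀ + ξ₁` and `e₂ = ξ₀ξ₁`; the `A`-algebra homomorphism
`A[x]/((x − 2t₁)(x − 2t₂)(x − (t₁ + t₂))) → B` sending `x` to `ξ₀ + ξ₁` is well defined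
and injective with image `φ⁻¹(A·1_C)`; in particular, `φ⁻¹(A·1_C)` is a free `A`-module of
rank `3`. -/
theorem statement8 (k : Type) [Field k] (hk : (2 : k) ≠ 0)
    (φ : B k →ₐ[A k] Cring k)
    (hφ0 : φ (ξ k 0) = ξC k)
    (hφ1 : φ (ξ k 1) = @algebraMap (A k) (Cring k) _ inferInstance _ (t k 0 + t k 1) - ξC k) :
    Subalgebra.comap φ ⊥ = Algebra.adjoin (A k) {ξ k 0 + ξ k 1, ξ k 0 * ξ k 1} ∧
    (∃ ψ : Q k →ₐ[A k] B k,
        ψ (Ideal.Quotient.mk (qIdeal k) Polynomial.X) = ξ k 0 + ξ k 1 ∧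
        Function.Injective ψ ∧
        ψ.range = Subalgebra.comap φ ⊥) ∧
    Nonempty (Module.Basis (Fin 3) (A k) (Subalgebra.comap φ ⊥)) := by
  have hcomap := comap_bot_eq_adjoin_sum φ hk hφ0 hφ1
  have hrange : (sumHom k).range = Subalgebra.comap φ ⊥ := (range_sumHom k).trans hcomap.symm
  refine ⟨hcomap.trans (adjoin_sum_mul_eq_adjoin_sum hk).symm,
    ⟨sumHom k, sumHom_X k, sumHom_injective hk, hrange⟩, ⟨(basisQ k).map ?_⟩⟩
  exact ((AlgEquiv.ofInjective _ (sumHom_injective hk)).trans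
    (Subalgebra.equivOfEq _ _ hrange)).toLinearEquiv

end Paper8
end
end
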